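/- Let r ≥ 2 be an integer, c₀ ∈ ℕ₀, c₁ ∈ ℂ, and let c_r, c_{r²} be positive real numbers with c_r ≤ 4 c_{r²}. Let φ(s) = c₀ s + c₁ + c_r r^{-s} + c_{r²} r^{-2s}. Then for every integer n ≥ 1 one has ‖n^{-φ}‖_{A⁺} ≥ n^{−Re c₁ + (c_r)²/(8c_{r²}) + c_{r²}}. Consequently, if C_φ maps A⁺ into itself then Re c₁ ≥ (c_r)²/(8 c_{r²}) + c_{r²}, and if C_φ is compact (equivalently, ‖n^{-φ}‖_{A⁺} → 0 as n → ∞) then Re c₁ > (c_r)²/(8 c_{r²}) + c_{r²}. -/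

import Mathlib

open Complex Filter
open scoped ENNReal

noncomputable section

/-- `f` has the Dirichlet series `∑ a n * (n+1)^{-s}` on the half-plane `re s > σ`. -/
def HasDirichletSeriesOn (f : ℂ → ℂ) (a : ℕ → ℂ) (σ : ℝ) : Prop :=
  ∀ s : ℂ, σ < s.re → HasSum (fun n : ℕ => a n * (n + 1 : ℂ) ^ (-s)) (f s)

/-- `f` belongs to the Wiener–Dirichlet algebra `𝒜⁺`, with (absolutely summable)
coefficient sequence `a`, where `a n` is the coefficient of `(n+1)^{-s}`.
The norm of `f` in `𝒜⁺` is `∑' n, Complex.abs (a n)`. -/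
def MemAplus (f : ℂ → ℂ) (a : ℕ → ℂ) : Prop :=
  Summable (fun n : ℕ => ‖a n‖) ∧ HasDirichletSeriesOn f a 0

/-- `ψ` belongs to the class `𝒟` of convergent Dirichlet series: it is analytic on
`re s > 0` and is representable by a convergent Dirichlet series for `re s` large enough. -/
def MemD (ψ : ℂ → ℂ) : Prop :=
  DifferentiableOn ℂ ψ {s : ℂ | 0 < s.re} ∧ ∃ a σ, HasDirichletSeriesOn ψ a σ

/-!
An element of `𝒜⁺` is bounded on `ℂ₀` by its norm, and `|n^{-φ(s)}| = n^{-Re φ(s)}`. Since `φ`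
extends continuously to the imaginary axis, `‖n^{-φ}‖ ≥ n^{-Re φ(z)}` for every `z` there; at
`z = it` with `cos (t log r) = -c_r / (4 c_{r²})` one finds
`Re φ(z) = Re c₁ - c_r² / (8 c_{r²}) - c_{r²}`. If the norms tend to `0`, this exponent must be
negative.

If `C_φ` maps `𝒜⁺` into itself, compose with the indicator of `{Re w < α}` for some `α ≤ 0`: it
vanishes on `ℂ₀`, so it lies in `𝒜⁺`, and the composite is a continuous `{0, 1}`-valued function on
`ℂ₀`. Thus `Re φ` never crosses the level `α` on `ℂ₀`; as `Re φ(1) ≥ Re c₁`, this gives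
`Re φ ≥ min 0 (Re c₁)` on `ℂ₀`, hence at `z`.
-/

section

variable {f : ℂ → ℂ} {a : ℕ → ℂ}

lemma norm_natCast_add_one_cpow_neg_le_one (k : ℕ) {s : ℂ} (hs : 0 ≤ s.re) :
    ‖((k : ℂ) + 1) ^ (-s)‖ ≤ 1 := by
  rw [← Nat.cast_succ, norm_natCast_cpow_of_pos k.succ_pos, neg_re]
  exact Real.rpow_le_one_of_one_le_of_nonpos (by simp) (by linarith)

lemma norm_mul_natCast_add_one_cpow_neg_le (a : ℕ → ℂ) (k : ℕ) {s : ℂ} (hs : 0 ≤ s.re) :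
    ‖a k * ((k : ℂ) + 1) ^ (-s)‖ ≤ ‖a k‖ := by
  rw [norm_mul]
  exact mul_le_of_le_one_right (norm_nonneg _) (norm_natCast_add_one_cpow_neg_le_one k hs)

lemma MemAplus.norm_le (h : MemAplus f a) {s : ℂ} (hs : 0 < s.re) :
    ‖f s‖ ≤ ∑' k, ‖a k‖ := by
  have hsum : Summable fun k => ‖a k * ((k : ℂ) + 1) ^ (-s)‖ :=
    h.1.of_nonneg_of_le (fun _ => norm_nonneg _)
      fun k => norm_mul_natCast_add_one_cpow_neg_le a k hs.le
  rw [← (h.2 s hs).tsum_eq]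
  exact (norm_tsum_le_tsum_norm hsum).trans
    (hsum.tsum_le_tsum (fun k => norm_mul_natCast_add_one_cpow_neg_le a k hs.le) h.1)

lemma MemAplus.continuousOn (h : MemAplus f a) : ContinuousOn f {s | 0 < s.re} := by
  refine ContinuousOn.congr (f := fun s => ∑' k, a k * ((k : ℂ) + 1) ^ (-s)) ?_
    fun s hs => ((h.2 s hs).tsum_eq).symm
  refine continuousOn_tsum (fun k => ?_) h.1
    fun k s hs => norm_mul_natCast_add_one_cpow_neg_le a k hs.le
  have hk : ((k : ℂ) + 1) ≠ 0 := by exact_mod_cast k.succ_ne_zero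
  exact (continuous_const.mul (continuous_neg.const_cpow (Or.inl hk))).continuousOn

lemma memAplus_zero_of_eqOn (hf : ∀ s, 0 < s.re → f s = 0) : MemAplus f 0 :=
  ⟨by simp [summable_zero], fun s hs => by simp [hf s hs, hasSum_zero]⟩

end

lemma le_of_continuousAt_of_forall_re_pos_le {f g : ℂ → ℝ} {z : ℂ} (hz : 0 ≤ z.re)
    (hf : ContinuousAt f z) (hg : ContinuousAt g z) (h : ∀ s : ℂ, 0 < s.re → f s ≤ g s) :
    f z ≤ g z := by
  have hz' : z ∈ closure {s : ℂ | 0 < s.re} := by rwa [closure_setOfPred_lt_re]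
  exact hf.continuousWithinAt.closure_le hz' hg.continuousWithinAt h

lemma le_re_of_comp_memAplus {φ : ℂ → ℂ}
    (hmap : ∀ f a, MemAplus f a → ∃ b, MemAplus (f ∘ φ) b)
    {α : ℝ} (hα : α ≤ 0) {s t : ℂ} (hs : 0 < s.re) (ht : 0 < t.re) (hαt : α ≤ (φ t).re) :
    α ≤ (φ s).re := by
  by_contra! hsα
  set F : ℂ → ℂ := fun z => if z.re < α then 1 else 0
  have hF : MemAplus F 0 := memAplus_zero_of_eqOn fun z hz => if_neg (by linarith)
  obtain ⟨b, hb⟩ := hmap F 0 hF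
  have hconst := (convex_halfSpace_re_gt 0).isPreconnected.constant_of_mapsTo
    (Set.toFinite ({0, 1} : Set ℂ)).isDiscrete hb.continuousOn
    (fun z _ => by by_cases h : (φ z).re < α <;> simp [F, h]) hs ht
  simp [F, hsα, not_lt.mpr hαt] at hconst

def quadraticSymbol (c₀ : ℕ) (c₁ : ℂ) (r : ℕ) (cr cr2 : ℝ) (s : ℂ) : ℂ :=
  c₀ * s + c₁ + cr * (r : ℂ) ^ (-s) + cr2 * (r : ℂ) ^ (-(2 * s))

lemma continuous_quadraticSymbol (c₀ : ℕ) (c₁ : ℂ) {r : ℕ} (hr : r ≠ 0) (cr cr2 : ℝ) :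
    Continuous (quadraticSymbol c₀ c₁ r cr cr2) := by
  have hr' : (r : ℂ) ≠ 0 := by exact_mod_cast hr
  have hpow : ∀ w : ℂ → ℂ, Continuous w → Continuous fun s => (r : ℂ) ^ w s :=
    fun w hw => hw.const_cpow (Or.inl hr')
  unfold quadraticSymbol
  exact ((continuous_const.mul continuous_id).add continuous_const).add
    (continuous_const.mul (hpow _ continuous_neg)) |>.add
    (continuous_const.mul (hpow _ (continuous_const.mul continuous_id).neg))

lemma re_le_re_quadraticSymbol_one (c₀ : ℕ) (c₁ : ℂ) (r : ℕ) {cr cr2 : ℝ} (hcr : 0 ≤ cr)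
    (hcr2 : 0 ≤ cr2) :
    c₁.re ≤ (quadraticSymbol c₀ c₁ r cr cr2 1).re := by
  have hpow : ∀ y : ℝ, 0 ≤ ((r : ℂ) ^ (y : ℂ)).re := fun y => by
    rw [← ofReal_natCast, ← ofReal_cpow r.cast_nonneg, ofReal_re]
    positivity
  have h1 := mul_nonneg hcr (hpow (-1))
  have h2 := mul_nonneg hcr2 (hpow (-2))
  push_cast at h1 h2
  simp only [quadraticSymbol, mul_one, add_re, natCast_re, mul_re, ofReal_re, ofReal_im, zero_mul,
    sub_zero]
  linarith [c₀.cast_nonneg (α := ℝ)]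

lemma Real.exists_mul_cos_add_mul_cos_two_mul_eq {a b : ℝ} (hb : 0 < b) (hab : |a| ≤ 4 * b) :
    ∃ θ : ℝ, a * Real.cos θ + b * Real.cos (2 * θ) = -(a ^ 2 / (8 * b) + b) := by
  have hu : |-(a / (4 * b))| ≤ 1 := by
    rw [abs_neg, abs_div, abs_of_pos (by positivity : 0 < 4 * b), div_le_one (by positivity)]
    exact hab
  obtain ⟨hu1, hu2⟩ := abs_le.mp hu
  refine ⟨Real.arccos (-(a / (4 * b))), ?_⟩
  rw [Real.cos_two_mul, Real.cos_arccos hu1 hu2]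
  field_simp
  ring

lemma re_ofReal_cpow_neg_mul_I {x : ℝ} (hx : 0 < x) (t : ℝ) :
    ((x : ℂ) ^ (-(t * I))).re = Real.cos (t * Real.log x) := by
  rw [cpow_def_of_ne_zero (by exact_mod_cast hx.ne'), ← ofReal_log hx.le,
    show (Real.log x : ℂ) * -(t * I) = (-(t * Real.log x) : ℝ) * I by push_cast; ring,
    exp_ofReal_mul_I_re, Real.cos_neg]

lemma exists_re_eq_zero_re_quadraticSymbol_eq (c₀ : ℕ) (c₁ : ℂ) {r : ℕ} (hr : 1 < r)
    {cr cr2 : ℝ} (hcr2 : 0 < cr2) (hcr : |cr| ≤ 4 * cr2) :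
    ∃ z : ℂ, z.re = 0 ∧
      (quadraticSymbol c₀ c₁ r cr cr2 z).re = c₁.re - (cr ^ 2 / (8 * cr2) + cr2) := by
  obtain ⟨θ, hθ⟩ := Real.exists_mul_cos_add_mul_cos_two_mul_eq hcr2 hcr
  have hlog : Real.log r ≠ 0 := (Real.log_pos (by exact_mod_cast hr)).ne'
  have hr0 : (0 : ℝ) < r := by exact_mod_cast (zero_lt_one.trans hr)
  set t := θ / Real.log r
  have hcos : ∀ k : ℝ, ((r : ℂ) ^ (-((k * t : ℝ) * I))).re = Real.cos (k * θ) := fun k => by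
    rw [← ofReal_natCast, re_ofReal_cpow_neg_mul_I hr0, mul_assoc, div_mul_cancel₀ _ hlog]
  have h1 : -((t : ℂ) * I) = -(((1 * t : ℝ) : ℂ) * I) := by push_cast; ring
  have h2 : -(2 * ((t : ℂ) * I)) = -(((2 * t : ℝ) : ℂ) * I) := by push_cast; ring
  refine ⟨t * I, by simp, ?_⟩
  rw [quadraticSymbol, h1, h2]
  simp only [add_re, mul_re, ofReal_re, ofReal_im, natCast_re, natCast_im, I_re, I_im, hcos,
    mul_zero, zero_mul, sub_zero]
  rw [one_mul]
  linarith

theorem rpow_le_tsum_norm_of_memAplus {φ : ℂ → ℂ} {c₀ : ℕ} {c₁ : ℂ} {r : ℕ} (hr : 1 < r)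
    {cr cr2 : ℝ} (hcr2 : 0 < cr2) (hcr : |cr| ≤ 4 * cr2)
    (hφ : ∀ s : ℂ, 0 < s.re → φ s = quadraticSymbol c₀ c₁ r cr cr2 s) {n : ℕ} (hn : 0 < n)
    {a : ℕ → ℂ} (h : MemAplus (fun s => (n : ℂ) ^ (-(φ s))) a) :
    (n : ℝ) ^ (-c₁.re + cr ^ 2 / (8 * cr2) + cr2) ≤ ∑' k, ‖a k‖ := by
  obtain ⟨z, hz, hφz⟩ := exists_re_eq_zero_re_quadraticSymbol_eq c₀ c₁ hr hcr2 hcr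
  have hcont : Continuous fun s => ‖(n : ℂ) ^ (-quadraticSymbol c₀ c₁ r cr cr2 s)‖ :=
    ((continuous_quadraticSymbol c₀ c₁ (by omega) cr cr2).neg.const_cpow
      (Or.inl (by exact_mod_cast hn.ne'))).norm
  have hbound := le_of_continuousAt_of_forall_re_pos_le hz.ge hcont.continuousAt
    continuousAt_const fun s hs => by simpa [hφ s hs] using h.norm_le hs
  rw [norm_natCast_cpow_of_pos hn, neg_re, hφz] at hbound
  convert hbound using 2
  ring

theorem le_re_of_comp_memAplus_quadraticSymbol {φ : ℂ → ℂ} {c₀ : ℕ} {c₁ : ℂ} {r : ℕ}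
    (hr : 1 < r) {cr cr2 : ℝ} (hcr : 0 < cr) (hcr2 : 0 < cr2) (hle : cr ≤ 4 * cr2)
    (hφ : ∀ s : ℂ, 0 < s.re → φ s = quadraticSymbol c₀ c₁ r cr cr2 s)
    (hmap : ∀ f a, MemAplus f a → ∃ b, MemAplus (f ∘ φ) b) :
    cr ^ 2 / (8 * cr2) + cr2 ≤ c₁.re := by
  obtain ⟨z, hz, hφz⟩ := exists_re_eq_zero_re_quadraticSymbol_eq c₀ c₁ hr hcr2
    (abs_le.mpr ⟨by linarith, hle⟩)
  have hφ1 : min 0 c₁.re ≤ (φ 1).re := by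
    rw [hφ 1 (by simp)]
    exact (min_le_right _ _).trans (re_le_re_quadraticSymbol_one c₀ c₁ r hcr.le hcr2.le)
  have hmin : min 0 c₁.re ≤ c₁.re - (cr ^ 2 / (8 * cr2) + cr2) := by
    rw [← hφz]
    refine le_of_continuousAt_of_forall_re_pos_le hz.ge continuousAt_const
      (continuous_re.comp (continuous_quadraticSymbol c₀ c₁ (by omega) cr cr2)).continuousAt
      fun s hs => ?_
    rw [Function.comp_apply, ← hφ s hs]
    exact le_re_of_comp_memAplus hmap (min_le_left _ _) hs one_pos hφ1
  have hpos : 0 < cr ^ 2 / (8 * cr2) + cr2 := by positivity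
  rcases min_le_iff.mp hmin with h | h <;> linarith

/-- Proposition 2.8 (b).  Let `r ≥ 2`, `c₀ ∈ ℕ₀`, `c₁ ∈ ℂ`,
`c_r, c_{r²} > 0` with `c_r ≤ 4 c_{r²}`, and
`φ(s) = c₀ s + c₁ + c_r r^{-s} + c_{r²} r^{-2s}`.  Then
`‖n^{-φ}‖_{𝒜⁺} ≥ n^{-re c₁ + c_r²/(8 c_{r²}) + c_{r²}}` for every `n ≥ 1`;
consequently, if `C_φ` maps `𝒜⁺` into itself then `re c₁ ≥ c_r²/(8 c_{r²}) + c_{r²}`,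
and if `C_φ` is compact (equivalently `‖n^{-φ}‖_{𝒜⁺} → 0`) then the inequality is
strict. -/
theorem statement_8 (φ : ℂ → ℂ) (r : ℕ) (hr : 2 ≤ r) (c₀ : ℕ) (c₁ : ℂ)
    (cr cr2 : ℝ) (hcr : 0 < cr) (hcr2 : 0 < cr2) (hle : cr ≤ 4 * cr2)
    (hform : ∀ s : ℂ, 0 < s.re →
      φ s = (c₀ : ℂ) * s + c₁ + (cr : ℂ) * (r : ℂ) ^ (-s) + (cr2 : ℂ) * (r : ℂ) ^ (-(2 * s))) :
    (∀ n : ℕ, 1 ≤ n → ∀ a, MemAplus (fun s : ℂ => (n : ℂ) ^ (-(φ s))) a →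
      (n : ℝ) ^ (-c₁.re + cr ^ 2 / (8 * cr2) + cr2) ≤ ∑' k : ℕ, ‖a k‖) ∧
    ((∀ f a, MemAplus f a → ∃ b, MemAplus (f ∘ φ) b) →
      cr ^ 2 / (8 * cr2) + cr2 ≤ c₁.re) ∧
    (∀ A : ℕ → ℕ → ℂ,
      (∀ n : ℕ, MemAplus (fun s : ℂ => (n + 1 : ℂ) ^ (-(φ s))) (A n)) →
      Tendsto (fun n : ℕ => ∑' k : ℕ, ‖A n k‖) atTop (nhds 0) →
      cr ^ 2 / (8 * cr2) + cr2 < c₁.re) := by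
  have lower_bound : ∀ n : ℕ, 1 ≤ n → ∀ a, MemAplus (fun s : ℂ => (n : ℂ) ^ (-(φ s))) a →
      (n : ℝ) ^ (-c₁.re + cr ^ 2 / (8 * cr2) + cr2) ≤ ∑' k : ℕ, ‖a k‖ :=
    fun n hn a h =>
      rpow_le_tsum_norm_of_memAplus hr hcr2 (abs_le.mpr ⟨by linarith, hle⟩) hform hn h
  refine ⟨lower_bound, le_re_of_comp_memAplus_quadraticSymbol hr hcr hcr2 hle hform,
    fun A hA hlim => ?_⟩
  by_contra! hc
  have one_le : ∀ n : ℕ, 1 ≤ ∑' k, ‖A n k‖ := fun n =>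
    (Real.one_le_rpow (by simp) (by linarith)).trans
      (lower_bound (n + 1) n.succ_pos (A n) (by simpa using hA n))
  obtain ⟨n, hn⟩ := (hlim.eventually_lt_const one_pos).exists
  linarith [one_le n]
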